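/- arXiv:2411.09583 — 3 statements merged into one kernel-verified Lean document; each statement's English description precedes it below -/
import Mathlib

section
/- For ω > 0, the two-dimensional Fourier transform of the indicator function of the unit disk satisfies ∫_{‖x‖≤1} e^{i⟨ω',x⟩} dx = (2π/‖ω'‖) J₁(‖ω'‖), where J₁ is the Bessel function of the first kind of order 1. -/
open MeasureTheory Real

/-- The Bessel function of the first kind of nonnegative integer order `l`,
defined by its power series. -/
noncomputable def besselJ (l : ℕ) (t : ℝ) : ℝ :=
  ∑' k : ℕ, (-1 : ℝ) ^ k / (Nat.factorial k * Nat.factorial (k + l)) * (t / 2) ^ (2 * k + l)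

/-- The Bessel function of the first kind of integer order, with
`J_{-l} = (-1)^l J_l`. -/
noncomputable def besselJZ (l : ℤ) (t : ℝ) : ℝ :=
  if 0 ≤ l then besselJ l.toNat t else (-1 : ℝ) ^ (-l).toNat * besselJ (-l).toNat t

open Set intervalIntegral


lemma integral_cos_pow_even_symm (k : ℕ) :
    ∫ x in (-π)..π, cos x ^ (2 * k) =
      2 * π * ∏ i ∈ Finset.range k, (2 * (i : ℝ) + 1) / (2 * i + 2) := by
  induction k with
  | zero => simp [two_mul]
  | succ k ih =>
    have h2 : 2 * (k + 1) = 2 * k + 2 := by ring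
    rw [h2, integral_cos_pow, ih, Finset.prod_range_succ]
    simp only [Real.sin_pi, Real.sin_neg, Real.sin_pi]
    push_cast
    ring

lemma integral_cos_pow_odd_symm (k : ℕ) :
    ∫ x in (-π)..π, cos x ^ (2 * k + 1) = 0 := by
  induction k with
  | zero => simp
  | succ k ih =>
    have h2 : 2 * (k + 1) + 1 = 2 * k + 1 + 2 := by ring
    rw [h2, integral_cos_pow, ih]
    simp

lemma prod_ratio_eq (k : ℕ) :
    ∏ i ∈ Finset.range k, (2 * (i : ℝ) + 1) / (2 * i + 2) =
      (Nat.factorial (2 * k) : ℝ) / (4 ^ k * Nat.factorial k * Nat.factorial k) := by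
  induction k with
  | zero => simp
  | succ k ih =>
    rw [Finset.prod_range_succ, ih]
    have h2 : 2 * (k + 1) = (2 * k + 1) + 1 := by ring
    rw [h2]
    have e1 : (Nat.factorial (2 * k + 1 + 1) : ℝ) =
        (2 * k + 2) * ((2 * k + 1) * Nat.factorial (2 * k)) := by
      rw [Nat.factorial_succ, Nat.factorial_succ]; push_cast; ring
    have e2 : (Nat.factorial (k + 1) : ℝ) = (k + 1) * Nat.factorial k := by
      rw [Nat.factorial_succ]; push_cast; ring
    have hf : (Nat.factorial k : ℝ) ≠ 0 := Nat.cast_ne_zero.mpr (Nat.factorial_ne_zero k)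
    have h4 : (4 : ℝ) ^ k ≠ 0 := by positivity
    have hk1 : (k : ℝ) + 1 ≠ 0 := by positivity
    rw [e1, e2, pow_succ]
    field_simp
    ring


lemma measurableSet_disk : MeasurableSet {p : ℝ × ℝ | p.1 ^ 2 + p.2 ^ 2 ≤ 1} :=
  (isClosed_le (by fun_prop) continuous_const).measurableSet

lemma disk_moment (n : ℕ) :
    ∫ p in {p : ℝ × ℝ | p.1 ^ 2 + p.2 ^ 2 ≤ 1}, p.1 ^ n =
      (1 / (n + 2) : ℝ) * ∫ θ in (-π)..π, cos θ ^ n := by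
  set S : Set (ℝ × ℝ) := {p | p.1 ^ 2 + p.2 ^ 2 ≤ 1} with hSdef
  rw [← MeasureTheory.integral_indicator measurableSet_disk,
    ← integral_comp_polarCoord_symm (fun p => S.indicator (fun q : ℝ × ℝ => q.1 ^ n) p)]
  have key : EqOn (fun p : ℝ × ℝ => p.1 • S.indicator (fun q : ℝ × ℝ => q.1 ^ n) (polarCoord.symm p))
      ((Ioc (0:ℝ) 1 ×ˢ Ioo (-π) π).indicator (fun q : ℝ × ℝ => q.1 ^ (n+1) * cos q.2 ^ n))
      polarCoord.target := by
    rintro ⟨x, θ⟩ ⟨hx, hθ⟩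
    simp only [polarCoord_target] at *
    have hx' : (0:ℝ) < x := hx
    by_cases h : x ≤ 1
    · have hmem : ((x * cos θ, x * sin θ) : ℝ × ℝ) ∈ S := by
        show (x * cos θ) ^ 2 + (x * sin θ) ^ 2 ≤ 1
        have h' : (x * cos θ) ^ 2 + (x * sin θ) ^ 2 = x ^ 2 := by
          nlinarith [sin_sq_add_cos_sq θ]
        rw [h']
        nlinarith
      have hmem2 : ((x, θ) : ℝ × ℝ) ∈ Ioc (0:ℝ) 1 ×ˢ Ioo (-π) π := ⟨⟨hx', h⟩, hθ⟩
      simp only [polarCoord_symm_apply, Set.indicator_of_mem hmem, Set.indicator_of_mem hmem2,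
        smul_eq_mul, mul_pow]
      ring
    · have hnot : ((x * cos θ, x * sin θ) : ℝ × ℝ) ∉ S := by
        show ¬ ((x * cos θ) ^ 2 + (x * sin θ) ^ 2 ≤ 1)
        rw [not_le]
        have h' : (x * cos θ) ^ 2 + (x * sin θ) ^ 2 = x ^ 2 := by
          nlinarith [sin_sq_add_cos_sq θ]
        rw [h']
        nlinarith
      have hnot2 : ((x, θ) : ℝ × ℝ) ∉ Ioc (0:ℝ) 1 ×ˢ Ioo (-π) π := by
        intro hc; exact h hc.1.2
      simp only [polarCoord_symm_apply, Set.indicator_of_notMem hnot,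
        Set.indicator_of_notMem hnot2, smul_zero]
  rw [setIntegral_congr_fun polarCoord.open_target.measurableSet key]
  have hsub : (Ioc (0:ℝ) 1 ×ˢ Ioo (-π) π) ⊆ polarCoord.target := by
    rw [polarCoord_target]
    exact Set.prod_mono Ioc_subset_Ioi_self subset_rfl
  rw [setIntegral_indicator ((measurableSet_Ioc.prod measurableSet_Ioo)),
    Set.inter_eq_self_of_subset_right hsub]
  have hint : IntegrableOn (fun q : ℝ × ℝ => q.1 ^ (n+1) * cos q.2 ^ n)
      (Ioc (0:ℝ) 1 ×ˢ Ioo (-π) π) := by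
    apply IntegrableOn.mono_set (t := Icc (0:ℝ) 1 ×ˢ Icc (-π) π)
    · exact ContinuousOn.integrableOn_compact (isCompact_Icc.prod isCompact_Icc)
        (Continuous.continuousOn (by fun_prop))
    · exact Set.prod_mono Ioc_subset_Icc_self Ioo_subset_Icc_self
  rw [Measure.volume_eq_prod] at hint ⊢
  rw [setIntegral_prod _ hint]
  simp_rw [MeasureTheory.integral_const_mul]
  rw [MeasureTheory.integral_mul_const]
  have h1 : ∫ x in Ioc (0:ℝ) 1, x ^ (n+1) = 1 / (n + 2) := by
    rw [← intervalIntegral.integral_of_le (by norm_num : (0:ℝ) ≤ 1), integral_pow]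
    push_cast
    simp
    ring
  have h2 : ∫ θ in Ioo (-π) π, cos θ ^ n = ∫ θ in (-π)..π, cos θ ^ n := by
    rw [intervalIntegral.integral_of_le (by linarith [pi_pos] : -π ≤ π),
      integral_Ioc_eq_integral_Ioo]
  rw [h1, h2]

set_option maxHeartbeats 1000000 in
lemma disk_exp (r : ℝ) (hr : 0 < r) :
    ∫ p in {p : ℝ × ℝ | p.1 ^ 2 + p.2 ^ 2 ≤ 1},
        Complex.exp (Complex.I * ((r * p.1 : ℝ) : ℂ)) =
      ((2 * π / r : ℝ) : ℂ) * ((besselJ 1 r : ℝ) : ℂ) := by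
  set S : Set (ℝ × ℝ) := {p | p.1 ^ 2 + p.2 ^ 2 ≤ 1} with hSdef
  have hSsub : S ⊆ Icc ((-1, -1) : ℝ × ℝ) (1, 1) := by
    rintro ⟨a, b⟩ hp
    have hp' : a ^ 2 + b ^ 2 ≤ 1 := hp
    refine ⟨⟨?_, ?_⟩, ?_, ?_⟩ <;> simp only [] <;> nlinarith [sq_nonneg a, sq_nonneg b,
      sq_nonneg (a - 1), sq_nonneg (a + 1), sq_nonneg (b - 1), sq_nonneg (b + 1)]
  have hμS : volume S < ⊤ :=
    lt_of_le_of_lt (measure_mono hSsub) isCompact_Icc.measure_lt_top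
  set F : ℕ → ℝ × ℝ → ℂ :=
    fun n p => (Complex.I * ((r * p.1 : ℝ) : ℂ)) ^ n / (Nat.factorial n) with hFdef
  have hFcont : ∀ n, Continuous (F n) := by
    intro n
    apply Continuous.div_const
    exact (continuous_const.mul ((Complex.continuous_ofReal).comp
      (continuous_const.mul continuous_fst))).pow n
  have hFint : ∀ n, Integrable (F n) (volume.restrict S) := by
    intro n
    refine IntegrableOn.mono_set ?_ hSsub
    exact ContinuousOn.integrableOn_compact isCompact_Icc (hFcont n).continuousOn
  have hnorm : ∀ n, ∀ p ∈ S, ‖F n p‖ ≤ r ^ n / (Nat.factorial n) := by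
    intro n p hp
    have hp1 : |p.1| ≤ 1 := by
      have : p.1 ^ 2 + p.2 ^ 2 ≤ 1 := hp
      rw [abs_le]
      constructor <;> nlinarith [sq_nonneg p.2, sq_nonneg (p.1 - 1), sq_nonneg (p.1 + 1)]
    have h1 : ‖F n p‖ = |r * p.1| ^ n / (Nat.factorial n) := by
      rw [hFdef]
      simp [norm_div, abs_mul]
    rw [h1]
    have h2 : |r * p.1| ≤ r := by
      rw [abs_mul, abs_of_pos hr]
      calc r * |p.1| ≤ r * 1 := by gcongr
        _ = r := mul_one r
    gcongr
  have hsum : Summable fun n => ∫ p in S, ‖F n p‖ := by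
    apply Summable.of_nonneg_of_le
      (fun n => integral_nonneg fun p => norm_nonneg _)
      (fun n => ?_)
      (((Real.summable_pow_div_factorial r).mul_left ((volume S).toReal)))
    calc ∫ p in S, ‖F n p‖ ≤ ∫ _p in S, (r ^ n / Nat.factorial n) := by
          apply setIntegral_mono_on (hFint n).norm
            (integrableOn_const hμS.ne) measurableSet_disk
          exact hnorm n
      _ = (volume S).toReal * (r ^ n / Nat.factorial n) := by
          rw [setIntegral_const, smul_eq_mul]; rfl
  have hswap : ∫ p in S, Complex.exp (Complex.I * ((r * p.1 : ℝ) : ℂ)) =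
      ∑' n, ∫ p in S, F n p := by
    have h1 : ∫ p in S, Complex.exp (Complex.I * ((r * p.1 : ℝ) : ℂ)) =
        ∫ p in S, ∑' n, F n p := by
      apply MeasureTheory.integral_congr_ae
      filter_upwards with p
      rw [Complex.exp_eq_exp_ℂ, NormedSpace.exp_eq_tsum_div]
    rw [h1, ← integral_tsum_of_summable_integral_norm hFint hsum]
  rw [hswap]
  have hterm : ∀ n, ∫ p in S, F n p =
      (Complex.I ^ n * (r:ℂ) ^ n / (Nat.factorial n)) * ((∫ p in S, p.1 ^ n : ℝ) : ℂ) := by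
    intro n
    have : ∀ p : ℝ × ℝ, F n p =
        (Complex.I ^ n * (r:ℂ) ^ n / (Nat.factorial n)) * (((p.1 ^ n : ℝ)) : ℂ) := by
      intro p
      rw [hFdef]
      push_cast
      ring
    calc ∫ p in S, F n p
        = ∫ p in S, (Complex.I ^ n * (r:ℂ) ^ n / (Nat.factorial n)) * (((p.1 ^ n : ℝ)) : ℂ) :=
          MeasureTheory.integral_congr_ae (Filter.Eventually.of_forall fun p => this p)
      _ = (Complex.I ^ n * (r:ℂ) ^ n / (Nat.factorial n)) * ∫ p in S, (((p.1 ^ n : ℝ)) : ℂ) :=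
          MeasureTheory.integral_const_mul _ _
      _ = _ := by
        congr 1
        exact _root_.integral_ofReal (𝕜 := ℂ)
  set g : ℕ → ℝ :=
    fun k => π * (-1) ^ k * r ^ (2 * k) /
      (4 ^ k * Nat.factorial k * Nat.factorial (k + 1)) with hgdef
  have hfac : ∀ m : ℕ, ((Nat.factorial m : ℝ)) ≠ 0 :=
    fun m => Nat.cast_ne_zero.mpr (Nat.factorial_ne_zero m)
  have heven : ∀ k, ∫ p in S, F (2 * k) p = ((g k : ℝ) : ℂ) := by
    intro k
    rw [hterm, disk_moment, integral_cos_pow_even_symm, prod_ratio_eq]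
    have hI : Complex.I ^ (2 * k) = (((-1 : ℝ) ^ k : ℝ) : ℂ) := by
      rw [pow_mul, Complex.I_sq]
      push_cast
      ring
    rw [hI]
    have hre : (-1 : ℝ) ^ k * r ^ (2 * k) / (Nat.factorial (2 * k)) *
        (1 / (2 * (k:ℝ) + 2) * (2 * π *
          ((Nat.factorial (2 * k) : ℝ) / (4 ^ k * Nat.factorial k * Nat.factorial k)))) =
        g k := by
      simp only [hgdef]
      have e2 : (Nat.factorial (k + 1) : ℝ) = (k + 1) * Nat.factorial k := by
        rw [Nat.factorial_succ]; push_cast; ring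
      rw [e2]
      have h4 : (4 : ℝ) ^ k ≠ 0 := by positivity
      have hk1 : (k : ℝ) + 1 ≠ 0 := by positivity
      field_simp
    push_cast at hre ⊢
    rw [← hre]
    push_cast
    ring
  have hodd : ∀ k, ∫ p in S, F (2 * k + 1) p = 0 := by
    intro k
    rw [hterm, disk_moment, integral_cos_pow_odd_symm]
    simp
  have hgabs : ∀ k, |g k| ≤ π * ((r ^ 2 / 4) ^ k / Nat.factorial k) := by
    intro k
    have hpos : (0:ℝ) < 4 ^ k * Nat.factorial k * Nat.factorial (k + 1) := by positivity
    have habs : |g k| = π * r ^ (2 * k) / (4 ^ k * Nat.factorial k * Nat.factorial (k + 1)) := by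
      simp only [hgdef]
      rw [abs_div, abs_mul, abs_mul, abs_pow, abs_neg, abs_one, one_pow, mul_one,
        abs_of_pos pi_pos, abs_of_nonneg (by positivity : (0:ℝ) ≤ r ^ (2 * k)),
        abs_of_pos hpos]
    rw [habs]
    calc π * r ^ (2 * k) / (4 ^ k * Nat.factorial k * Nat.factorial (k + 1))
        ≤ π * r ^ (2 * k) / (4 ^ k * Nat.factorial k * 1) := by
          gcongr
          exact_mod_cast Nat.one_le_iff_ne_zero.mpr (Nat.factorial_ne_zero (k + 1))
      _ = π * ((r ^ 2 / 4) ^ k / Nat.factorial k) := by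
          rw [div_pow, ← pow_mul]
          ring
  have hgsum : Summable g := by
    apply summable_abs_iff.mp
    exact Summable.of_nonneg_of_le (fun k => abs_nonneg _) hgabs
      ((Real.summable_pow_div_factorial (r ^ 2 / 4)).mul_left π)
  have hsumEven : Summable fun k => ∫ p in S, F (2 * k) p := by
    simp_rw [heven]
    exact hgsum.map Complex.ofRealHom.toAddMonoidHom Complex.continuous_ofReal
  have hsumOdd : Summable fun k => ∫ p in S, F (2 * k + 1) p := by
    simp only [hodd]
    exact summable_zero
  rw [← tsum_even_add_odd hsumEven hsumOdd]
  have h2 : ∑' k, ∫ p in S, F (2 * k + 1) p = 0 := by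
    simp only [hodd, tsum_zero]
  have h1 : ∑' k, ∫ p in S, F (2 * k) p = ∑' k, ((g k : ℝ) : ℂ) :=
    tsum_congr fun k => heven k
  rw [h1, h2, add_zero, ← Complex.ofReal_tsum, ← Complex.ofReal_mul]
  norm_cast
  have hbj : (2 * π / r) * besselJ 1 r =
      ∑' k, (2 * π / r) * ((-1 : ℝ) ^ k / (Nat.factorial k * Nat.factorial (k + 1)) *
        (r / 2) ^ (2 * k + 1)) := by
    rw [besselJ, tsum_mul_left]
  rw [hbj]
  apply tsum_congr
  intro k
  simp only [hgdef]
  have h2k : (r / 2) ^ (2 * k + 1) = r ^ (2 * k) / 4 ^ k * (r / 2) := by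
    have h24 : (4:ℝ) ^ k = 2 ^ (2 * k) := by rw [pow_mul]; norm_num
    rw [pow_succ, div_pow, h24]
  rw [h2k]
  have h4 : (4 : ℝ) ^ k ≠ 0 := by positivity
  field_simp

/-- for nonzero ω ∈ ℝ², ∫_{‖x‖≤1} e^{i⟨ω,x⟩} dx = (2π/‖ω‖) J₁(‖ω‖). -/
theorem fourier_indicator_unit_disk (ω : EuclideanSpace ℝ (Fin 2)) (hω : ω ≠ 0) :
    (∫ x in Metric.closedBall (0 : EuclideanSpace ℝ (Fin 2)) 1,
        Complex.exp (Complex.I * ((inner ℝ ω x : ℝ) : ℂ))) =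
      ((2 * Real.pi / ‖ω‖ : ℝ) : ℂ) * (besselJ 1 ‖ω‖ : ℝ) := by
  set r : ℝ := ‖ω‖ with hrdef
  have hr : 0 < r := norm_pos_iff.mpr hω
  -- an orthonormal basis whose first vector is ω / r
  set u : EuclideanSpace ℝ (Fin 2) := (r⁻¹ : ℝ) • ω with hudef
  have hu : ‖u‖ = 1 := by
    rw [hudef, norm_smul, norm_inv, Real.norm_eq_abs, abs_of_pos hr, inv_mul_cancel₀ hr.ne']
  have hortho : Orthonormal ℝ (({0} : Set (Fin 2)).restrict (fun _ : Fin 2 => u)) := by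
    constructor
    · intro i; exact hu
    · intro i j hij
      exfalso
      apply hij
      have hi := i.2
      have hj := j.2
      simp only [Set.mem_singleton_iff] at hi hj
      exact Subtype.ext (hi.trans hj.symm)
  obtain ⟨b, hb⟩ := hortho.exists_orthonormalBasis_extension_of_card_eq
    (by simp) (v := fun _ : Fin 2 => u)
  have hb0 : b 0 = u := hb 0 rfl
  have h_inner : ∀ x : EuclideanSpace ℝ (Fin 2), (inner ℝ ω x : ℝ) = r * b.repr x 0 := by
    intro x
    rw [b.repr_apply_apply, hb0, hudef, real_inner_smul_left]
    field_simp
  have step1 : (∫ x in Metric.closedBall (0 : EuclideanSpace ℝ (Fin 2)) 1,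
        Complex.exp (Complex.I * ((inner ℝ ω x : ℝ) : ℂ))) =
      ∫ y in Metric.closedBall (0 : EuclideanSpace ℝ (Fin 2)) 1,
        Complex.exp (Complex.I * ((r * y 0 : ℝ) : ℂ)) := by
    simp_rw [h_inner]
    have hpre : (⇑b.repr) ⁻¹' (Metric.closedBall 0 1) =
        Metric.closedBall (0 : EuclideanSpace ℝ (Fin 2)) 1 := by
      ext x
      simp only [Set.mem_preimage, Metric.mem_closedBall, dist_zero_right]
      rw [LinearIsometryEquiv.norm_map]
    conv_lhs => rw [← hpre]
    exact b.measurePreserving_repr.setIntegral_preimage_emb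
      b.repr.toHomeomorph.measurableEmbedding
      (fun y => Complex.exp (Complex.I * ((r * y 0 : ℝ) : ℂ))) _
  rw [step1]
  have e1 : MeasurePreserving (MeasurableEquiv.piFinTwo fun _ : Fin 2 => ℝ) :=
    volume_preserving_piFinTwo _
  have e2 := EuclideanSpace.volume_preserving_symm_measurableEquiv_toLp (Fin 2)
  have key1 := e1.setIntegral_preimage_emb
    (MeasurableEquiv.piFinTwo fun _ : Fin 2 => ℝ).measurableEmbedding
    (fun p : ℝ × ℝ => Complex.exp (Complex.I * ((r * p.1 : ℝ) : ℂ)))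
    {p : ℝ × ℝ | p.1 ^ 2 + p.2 ^ 2 ≤ 1}
  have key2 := e2.setIntegral_preimage_emb
    (MeasurableEquiv.toLp 2 (Fin 2 → ℝ)).symm.measurableEmbedding
    (fun y : Fin 2 → ℝ => Complex.exp (Complex.I * ((r * y 0 : ℝ) : ℂ)))
    ((MeasurableEquiv.piFinTwo fun _ : Fin 2 => ℝ) ⁻¹' {p : ℝ × ℝ | p.1 ^ 2 + p.2 ^ 2 ≤ 1})
  have hset : (⇑(MeasurableEquiv.toLp 2 (Fin 2 → ℝ)).symm) ⁻¹'
      ((⇑(MeasurableEquiv.piFinTwo fun _ : Fin 2 => ℝ)) ⁻¹'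
        {p : ℝ × ℝ | p.1 ^ 2 + p.2 ^ 2 ≤ 1}) =
      Metric.closedBall (0 : EuclideanSpace ℝ (Fin 2)) 1 := by
    ext x
    simp only [Set.mem_preimage, Set.mem_setOf_eq, Metric.mem_closedBall, dist_zero_right,
      MeasurableEquiv.piFinTwo_apply]
    rw [EuclideanSpace.norm_eq]
    simp only [Real.norm_eq_abs, sq_abs, Fin.sum_univ_two]
    rw [show (1:ℝ) = Real.sqrt 1 by simp]
    rw [Real.sqrt_le_sqrt_iff (by positivity)]
    simp
  rw [hset] at key2
  have key2' : (∫ x in Metric.closedBall (0 : EuclideanSpace ℝ (Fin 2)) 1,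
        Complex.exp (Complex.I * ((r * x 0 : ℝ) : ℂ))) =
      ∫ y in (⇑(MeasurableEquiv.piFinTwo fun _ : Fin 2 => ℝ) ⁻¹'
          {p : ℝ × ℝ | p.1 ^ 2 + p.2 ^ 2 ≤ 1}),
        Complex.exp (Complex.I * ((r * y 0 : ℝ) : ℂ)) := key2
  have key1' : (∫ x in (⇑(MeasurableEquiv.piFinTwo fun _ : Fin 2 => ℝ) ⁻¹'
          {p : ℝ × ℝ | p.1 ^ 2 + p.2 ^ 2 ≤ 1}),
        Complex.exp (Complex.I * ((r * x 0 : ℝ) : ℂ))) =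
      ∫ p in {p : ℝ × ℝ | p.1 ^ 2 + p.2 ^ 2 ≤ 1},
        Complex.exp (Complex.I * ((r * p.1 : ℝ) : ℂ)) := key1
  rw [key2', key1', disk_exp r hr]
end

section
/- Orthogonality of Bessel functions: if a and b are distinct positive zeros of J_ℓ (ℓ a nonnegative integer), then ∫₀¹ J_ℓ(a r) J_ℓ(b r) r dr = 0. -/
open MeasureTheory Real

namespace BesselAux

noncomputable def bc (l k : ℕ) : ℝ := (-1 : ℝ) ^ k / (Nat.factorial k * Nat.factorial (k + l))
noncomputable def bf (l k : ℕ) (t : ℝ) : ℝ := bc l k * (t / 2) ^ (2 * k + l)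
noncomputable def bf1 (l k : ℕ) (t : ℝ) : ℝ :=
  bc l k * (2 * k + l : ℕ) * (t / 2) ^ (2 * k + l - 1) * (1 / 2)
noncomputable def bf2 (l k : ℕ) (t : ℝ) : ℝ :=
  bc l k * ((2 * k + l) * (2 * k + l - 1) : ℕ) * (t / 2) ^ (2 * k + l - 2) * (1 / 4)

noncomputable def besselJ1 (l : ℕ) (t : ℝ) : ℝ := ∑' k, bf1 l k t
noncomputable def besselJ2 (l : ℕ) (t : ℝ) : ℝ := ∑' k, bf2 l k t

lemma abs_bc_le (l k : ℕ) : |bc l k| ≤ 1 / k.factorial := by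
  rw [bc, abs_div, abs_pow, abs_neg, abs_one, one_pow]
  apply div_le_div_of_nonneg_left one_pos.le (by positivity)
  · rw [abs_of_nonneg (by positivity)]
    calc (k.factorial : ℝ) = k.factorial * 1 := by ring
    _ ≤ k.factorial * (k + l).factorial := by
        gcongr
        exact_mod_cast (k + l).factorial_pos
  -- order of args may need fixing

lemma hasDerivAt_bf (l k : ℕ) (t : ℝ) : HasDerivAt (bf l k) (bf1 l k t) t := by
  have h := (((hasDerivAt_id t).div_const 2).pow (2 * k + l)).const_mul (bc l k)
  refine h.congr_deriv (Eq.symm ?_)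
  rw [bf1]; simp only [id_eq]; push_cast; ring

lemma hasDerivAt_bf1 (l k : ℕ) (t : ℝ) : HasDerivAt (fun s => bf1 l k s) (bf2 l k t) t := by
  have h := ((((hasDerivAt_id t).div_const 2).pow (2 * k + l - 1)).const_mul
      (bc l k * (2 * k + l : ℕ))).mul_const (1 / 2 : ℝ)
  refine h.congr_deriv (Eq.symm ?_)
  rw [bf2, Nat.sub_sub]; simp only [id_eq]; push_cast; ring

lemma nat_le_two_pow (n : ℕ) : (n : ℝ) ≤ 2 ^ n := by
  exact_mod_cast (Nat.lt_two_pow_self (n := n)).le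

noncomputable def ub (M : ℝ) (l k : ℕ) : ℝ := (4 * M) ^ l * ((4 * M) ^ 2) ^ k / k.factorial

lemma summable_ub (M : ℝ) (l : ℕ) : Summable (ub M l) := by
  have := (Real.summable_pow_div_factorial ((4 * M) ^ 2)).mul_left ((4 * M) ^ l)
  apply this.congr
  intro k
  rw [ub, mul_div_assoc]

lemma ub_eq (M : ℝ) (l k : ℕ) :
    ub M l k = 4 ^ (2 * k + l) * M ^ (2 * k + l) / k.factorial := by
  rw [ub, ← pow_mul, ← pow_add, mul_pow, add_comm l (2 * k)]

lemma pow_half_le {t M : ℝ} (hM : 1 ≤ M) (ht : |t| ≤ 2 * M) {j n : ℕ} (hjn : j ≤ n) :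
    |t / 2| ^ j ≤ M ^ n := by
  calc |t / 2| ^ j ≤ M ^ j := by
        apply pow_le_pow_left₀ (abs_nonneg _)
        rw [abs_div, abs_two]
        linarith
    _ ≤ M ^ n := pow_le_pow_right₀ hM hjn

lemma bound_bf {t M : ℝ} (hM : 1 ≤ M) (ht : |t| ≤ 2 * M) (l k : ℕ) :
    ‖bf l k t‖ ≤ ub M l k := by
  have h1 := abs_bc_le l k
  have h2 : |t / 2| ^ (2 * k + l) ≤ M ^ (2 * k + l) := pow_half_le hM ht le_rfl
  have hk : (1 : ℝ) ≤ k.factorial := by exact_mod_cast k.factorial_pos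
  have h4 : (1 : ℝ) ≤ 4 ^ (2 * k + l) := one_le_pow₀ (by norm_num)
  rw [Real.norm_eq_abs, bf, abs_mul, abs_pow, ub_eq]
  rw [le_div_iff₀ (by positivity)]
  calc |bc l k| * |t / 2| ^ (2 * k + l) * k.factorial
      ≤ (1 / k.factorial) * M ^ (2 * k + l) * k.factorial := by
        have : (0:ℝ) ≤ M ^ (2*k+l) := le_trans (pow_nonneg (abs_nonneg _) _) h2
        gcongr
    _ = M ^ (2 * k + l) := by field_simp
    _ ≤ 4 ^ (2 * k + l) * M ^ (2 * k + l) := by nlinarith [pow_nonneg (le_trans zero_le_one hM) (2*k+l)]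

end BesselAux

namespace BesselAux

lemma bound_bf1 {t M : ℝ} (hM : 1 ≤ M) (ht : |t| ≤ 2 * M) (l k : ℕ) :
    ‖bf1 l k t‖ ≤ ub M l k := by
  have h1 := abs_bc_le l k
  have h2 : |t / 2| ^ (2 * k + l - 1) ≤ M ^ (2 * k + l) := pow_half_le hM ht (Nat.sub_le _ _)
  have hk : (1 : ℝ) ≤ k.factorial := by exact_mod_cast k.factorial_pos
  have h3 : ((2 * k + l : ℕ) : ℝ) ≤ 2 ^ (2 * k + l) := nat_le_two_pow _
  have hM0 : (0 : ℝ) ≤ M := le_trans zero_le_one hM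
  have h5 : (2:ℝ) ^ (2 * k + l) * M ^ (2 * k + l) ≤ 4 ^ (2 * k + l) * M ^ (2 * k + l) := by
    gcongr <;> norm_num
  rw [Real.norm_eq_abs, bf1, abs_mul, abs_mul, abs_mul, abs_pow, ub_eq,
    le_div_iff₀ (by positivity)]
  have hb : |bc l k| * |((2 * k + l : ℕ) : ℝ)| * |t / 2| ^ (2 * k + l - 1) * |(1:ℝ) / 2| *
      k.factorial ≤ (1 / k.factorial) * (2 ^ (2 * k + l)) * M ^ (2 * k + l) * (1/2) *
      k.factorial := by
    rw [abs_of_nonneg (by positivity : (0:ℝ) ≤ ((2 * k + l : ℕ) : ℝ))]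
    have : |(1:ℝ)/2| = 1/2 := by norm_num
    rw [this]
    gcongr
  refine hb.trans ?_
  have : (1 / (k.factorial:ℝ)) * (2 ^ (2 * k + l)) * M ^ (2 * k + l) * (1/2) * k.factorial
      = 2 ^ (2 * k + l) * M ^ (2 * k + l) / 2 := by field_simp
  rw [this]
  nlinarith [pow_nonneg hM0 (2*k+l), pow_nonneg (zero_le_two (α := ℝ)) (2*k+l)]

lemma bound_bf2 {t M : ℝ} (hM : 1 ≤ M) (ht : |t| ≤ 2 * M) (l k : ℕ) :
    ‖bf2 l k t‖ ≤ ub M l k := by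
  have h1 := abs_bc_le l k
  have h2 : |t / 2| ^ (2 * k + l - 2) ≤ M ^ (2 * k + l) := pow_half_le hM ht (Nat.sub_le _ _)
  have hk : (1 : ℝ) ≤ k.factorial := by exact_mod_cast k.factorial_pos
  have h3 : (((2 * k + l) * (2 * k + l - 1) : ℕ) : ℝ) ≤ 4 ^ (2 * k + l) := by
    have : ((2 * k + l) * (2 * k + l - 1) : ℕ) ≤ 2 ^ (2 * k + l) * 2 ^ (2 * k + l) :=
      Nat.mul_le_mul Nat.lt_two_pow_self.le
        (le_trans (Nat.sub_le _ _) Nat.lt_two_pow_self.le)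
    calc (((2 * k + l) * (2 * k + l - 1) : ℕ) : ℝ)
        ≤ ((2:ℝ) ^ (2 * k + l) * 2 ^ (2 * k + l)) := by exact_mod_cast this
      _ = 4 ^ (2 * k + l) := by rw [← mul_pow]; norm_num
  have hM0 : (0 : ℝ) ≤ M := le_trans zero_le_one hM
  rw [Real.norm_eq_abs, bf2, abs_mul, abs_mul, abs_mul, abs_pow, ub_eq,
    le_div_iff₀ (by positivity)]
  have hb : |bc l k| * |(((2 * k + l) * (2 * k + l - 1) : ℕ) : ℝ)| * |t / 2| ^ (2 * k + l - 2)
      * |(1:ℝ) / 4| * k.factorial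
      ≤ (1 / k.factorial) * (4 ^ (2 * k + l)) * M ^ (2 * k + l) * (1/4) * k.factorial := by
    rw [abs_of_nonneg (by positivity : (0:ℝ) ≤ (((2 * k + l) * (2 * k + l - 1) : ℕ) : ℝ))]
    have : |(1:ℝ)/4| = 1/4 := by norm_num
    rw [this]
    gcongr
  refine hb.trans ?_
  have : (1 / (k.factorial:ℝ)) * (4 ^ (2 * k + l)) * M ^ (2 * k + l) * (1/4) * k.factorial
      = 4 ^ (2 * k + l) * M ^ (2 * k + l) / 4 := by field_simp
  rw [this]
  nlinarith [pow_nonneg hM0 (2*k+l), pow_nonneg (by norm_num : (0:ℝ) ≤ 4) (2*k+l)]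

lemma exists_M (t : ℝ) : ∃ M : ℝ, 1 ≤ M ∧ |t| < 2 * M ∧ ∀ s : ℝ, |s| < |t| + 1 → |s| ≤ 2 * M := by
  refine ⟨max 1 ((|t| + 1) / 2), le_max_left _ _, ?_, ?_⟩
  · have : |t| + 1 ≤ 2 * max 1 ((|t| + 1) / 2) := by
      have := le_max_right 1 ((|t| + 1) / 2); linarith
    linarith
  · intro s hs
    have : |t| + 1 ≤ 2 * max 1 ((|t| + 1) / 2) := by
      have := le_max_right 1 ((|t| + 1) / 2); linarith
    linarith

lemma summable_bf (l : ℕ) (t : ℝ) : Summable (fun k => bf l k t) := by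
  obtain ⟨M, hM, ht, -⟩ := exists_M t
  exact (summable_ub M l).of_norm_bounded (fun k => bound_bf hM ht.le l k)

lemma summable_bf1 (l : ℕ) (t : ℝ) : Summable (fun k => bf1 l k t) := by
  obtain ⟨M, hM, ht, -⟩ := exists_M t
  exact (summable_ub M l).of_norm_bounded (fun k => bound_bf1 hM ht.le l k)

lemma summable_bf2 (l : ℕ) (t : ℝ) : Summable (fun k => bf2 l k t) := by
  obtain ⟨M, hM, ht, -⟩ := exists_M t
  exact (summable_ub M l).of_norm_bounded (fun k => bound_bf2 hM ht.le l k)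

lemma hasDerivAt_besselJ (l : ℕ) (t : ℝ) : HasDerivAt (besselJ l) (besselJ1 l t) t := by
  obtain ⟨M, hM, ht, hball⟩ := exists_M t
  have : besselJ l = fun s => ∑' k, bf l k s := rfl
  rw [this, besselJ1]
  refine hasDerivAt_tsum_of_isPreconnected (summable_ub M l)
    (Metric.isOpen_ball (x := (0:ℝ)) (ε := |t| + 1))
    ((convex_ball (0:ℝ) (|t| + 1)).isPreconnected)
    (fun k y _ => hasDerivAt_bf l k y) (fun k y hy => ?_) ?_ (summable_bf l t) ?_
  · rw [Metric.mem_ball, dist_zero_right, Real.norm_eq_abs] at hy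
    exact bound_bf1 hM (hball y hy) l k
  · rw [Metric.mem_ball, dist_zero_right, Real.norm_eq_abs]; linarith
  · rw [Metric.mem_ball, dist_zero_right, Real.norm_eq_abs]; linarith

lemma hasDerivAt_besselJ1 (l : ℕ) (t : ℝ) : HasDerivAt (besselJ1 l) (besselJ2 l t) t := by
  obtain ⟨M, hM, ht, hball⟩ := exists_M t
  have : besselJ1 l = fun s => ∑' k, bf1 l k s := rfl
  rw [this, besselJ2]
  refine hasDerivAt_tsum_of_isPreconnected (summable_ub M l)
    (Metric.isOpen_ball (x := (0:ℝ)) (ε := |t| + 1))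
    ((convex_ball (0:ℝ) (|t| + 1)).isPreconnected)
    (fun k y _ => hasDerivAt_bf1 l k y) (fun k y hy => ?_) ?_ (summable_bf1 l t) ?_
  · rw [Metric.mem_ball, dist_zero_right, Real.norm_eq_abs] at hy
    exact bound_bf2 hM (hball y hy) l k
  · rw [Metric.mem_ball, dist_zero_right, Real.norm_eq_abs]; linarith
  · rw [Metric.mem_ball, dist_zero_right, Real.norm_eq_abs]; linarith

end BesselAux

namespace BesselAux

lemma lemA (c : ℝ) (n : ℕ) (t : ℝ) :
    t * (c * (n : ℝ) * (t / 2) ^ (n - 1) * (1 / 2)) = (n : ℝ) * (c * (t / 2) ^ n) := by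
  cases n with
  | zero => simp
  | succ m => simp only [Nat.add_sub_cancel]; push_cast; ring

lemma lemB (c : ℝ) (n : ℕ) (t : ℝ) :
    t ^ 2 * (c * ((n * (n - 1) : ℕ) : ℝ) * (t / 2) ^ (n - 2) * (1 / 4))
      = (n : ℝ) * ((n - 1 : ℕ) : ℝ) * (c * (t / 2) ^ n) := by
  match n with
  | 0 => simp
  | 1 => simp
  | (m + 2) =>
    have h1 : m + 2 - 2 = m := by omega
    have h2 : m + 2 - 1 = m + 1 := by omega
    rw [h1, h2]; push_cast; ring

lemma bc_succ (l k : ℕ) :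
    ((k : ℝ) + 1) * ((k : ℝ) + 1 + l) * bc l (k + 1) = - bc l k := by
  have e1 : (k + 1) + l = (k + l) + 1 := by omega
  rw [bc, bc, e1, Nat.factorial_succ, Nat.factorial_succ, pow_succ]
  have h1 : ((k.factorial : ℝ)) ≠ 0 := by exact_mod_cast k.factorial_ne_zero
  have h2 : (((k + l).factorial : ℝ)) ≠ 0 := by exact_mod_cast (k + l).factorial_ne_zero
  have h3 : ((k : ℝ) + 1) ≠ 0 := by positivity
  have h4 : ((k : ℝ) + l + 1) ≠ 0 := by positivity
  push_cast
  field_simp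
  ring

noncomputable def bh (l : ℕ) (t : ℝ) (k : ℕ) : ℝ := 4 * (k : ℝ) * ((k : ℝ) + l) * bf l k t

lemma summable_bh (l : ℕ) (t : ℝ) : Summable (bh l t) := by
  obtain ⟨M, hM, ht, -⟩ := exists_M t
  apply ((summable_ub (4 * M) l).mul_left 4).of_norm_bounded
  intro k
  have hb := bound_bf hM ht.le l k
  have hub : 0 ≤ ub M l k := le_trans (norm_nonneg _) hb
  have hcast : ∀ m : ℕ, m ≤ 2 * k + l → ((m:ℝ)) ≤ 2 ^ (2 * k + l) := by
    intro m hm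
    calc ((m:ℝ)) ≤ ((2 * k + l : ℕ) : ℝ) := by exact_mod_cast hm
      _ ≤ 2 ^ (2 * k + l) := nat_le_two_pow _
  have h3 : ((k:ℝ)) ≤ 2 ^ (2 * k + l) := hcast k (by omega)
  have h4 : ((k:ℝ)) + l ≤ 2 ^ (2 * k + l) := by
    have := hcast (k + l) (by omega); push_cast at this; linarith
  have hkk : (k:ℝ) * ((k:ℝ) + l) ≤ 4 ^ (2 * k + l) := by
    calc (k:ℝ) * ((k:ℝ) + l) ≤ 2 ^ (2 * k + l) * 2 ^ (2 * k + l) :=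
          mul_le_mul h3 h4 (by positivity) (by positivity)
      _ = 4 ^ (2 * k + l) := by rw [← mul_pow]; norm_num
  calc ‖bh l t k‖ = 4 * (k:ℝ) * ((k:ℝ) + l) * ‖bf l k t‖ := by
        rw [bh, norm_mul, norm_mul, norm_mul]
        simp [abs_of_nonneg, Nat.cast_nonneg, add_nonneg (Nat.cast_nonneg (α := ℝ) k) (Nat.cast_nonneg (α := ℝ) l)]
    _ ≤ 4 * (k:ℝ) * ((k:ℝ) + l) * ub M l k := by
        have h0 : (0:ℝ) ≤ 4 * (k:ℝ) * ((k:ℝ) + l) := by positivity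
        exact mul_le_mul_of_nonneg_left hb h0
    _ ≤ 4 * 4 ^ (2 * k + l) * ub M l k := by
        apply mul_le_mul_of_nonneg_right _ hub
        nlinarith [hkk]
    _ = 4 * ub (4 * M) l k := by
        rw [ub_eq, ub_eq, mul_pow]; ring

lemma bessel_ode (l : ℕ) (t : ℝ) :
    t ^ 2 * besselJ2 l t + t * besselJ1 l t + (t ^ 2 - (l:ℝ) ^ 2) * besselJ l t = 0 := by
  have s0 := summable_bf l t
  have s1 := summable_bf1 l t
  have s2 := summable_bf2 l t
  have sh := summable_bh l t
  have key : ∀ k, t ^ 2 * bf2 l k t + t * bf1 l k t + (t ^ 2 - (l:ℝ) ^ 2) * bf l k t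
      = bh l t k - bh l t (k + 1) := by
    intro k
    have hA : t * bf1 l k t = ((2 * k + l : ℕ) : ℝ) * bf l k t := lemA (bc l k) (2 * k + l) t
    have hB : t ^ 2 * bf2 l k t
        = ((2 * k + l : ℕ) : ℝ) * ((2 * k + l - 1 : ℕ) : ℝ) * bf l k t :=
      lemB (bc l k) (2 * k + l) t
    have hsucc : bh l t (k + 1) = - (t ^ 2 * bf l k t) := by
      have hb := bc_succ l k
      rw [bh, bf, bf]
      have he : 2 * (k + 1) + l = (2 * k + l) + 2 := by ring
      rw [he, pow_add]
      push_cast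
      linear_combination (4 * (t / 2) ^ (2 * k + l) * (t / 2) ^ 2) * hb
    have hcoef : ((2 * k + l : ℕ) : ℝ) * ((2 * k + l - 1 : ℕ) : ℝ) + ((2 * k + l : ℕ) : ℝ)
        - (l:ℝ) ^ 2 = 4 * (k:ℝ) * ((k:ℝ) + l) := by
      rcases Nat.eq_zero_or_pos (2 * k + l) with h | h
      · have hk0 : k = 0 := by omega
        have hl0 : l = 0 := by omega
        subst hk0; subst hl0; simp
      · have h1 : ((2 * k + l - 1 : ℕ) : ℝ) = ((2 * k + l : ℕ) : ℝ) - 1 := by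
          rw [Nat.cast_sub h]; simp
        rw [h1]; push_cast; ring
    rw [hB, hA, hsucc, bh]
    linear_combination (bf l k t) * hcoef
  have hJ : besselJ l t = ∑' k, bf l k t := rfl
  rw [hJ, besselJ1, besselJ2, ← tsum_mul_left, ← tsum_mul_left, ← tsum_mul_left,
    ← Summable.tsum_add (s2.mul_left _) (s1.mul_left _),
    ← Summable.tsum_add ((s2.mul_left _).add (s1.mul_left _)) (s0.mul_left _)]
  have h1 : ∑' k, (t ^ 2 * bf2 l k t + t * bf1 l k t + (t ^ 2 - (l:ℝ) ^ 2) * bf l k t)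
      = ∑' k, (bh l t k - bh l t (k + 1)) := tsum_congr key
  rw [h1, Summable.tsum_sub sh ((summable_nat_add_iff 1).mpr sh),
    Summable.tsum_eq_zero_add sh]
  simp [bh]

end BesselAux

namespace BesselAux

lemma continuous_besselJ (l : ℕ) : Continuous (besselJ l) := by
  have hd : Differentiable ℝ (besselJ l) := fun t => (hasDerivAt_besselJ l t).differentiableAt
  exact hd.continuous

lemma prod_zero (l : ℕ) : besselJ l 0 * besselJ1 l 0 = 0 := by
  cases l with
  | zero =>
    have h : besselJ1 0 0 = 0 := by
      rw [besselJ1]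
      have : ∀ k, bf1 0 k 0 = 0 := by
        intro k
        cases k with
        | zero => simp [bf1]
        | succ m =>
          have : (0:ℝ) / 2 = 0 := by norm_num
          rw [bf1, this, zero_pow (by omega)]
          ring
      simp [this]
    rw [h, mul_zero]
  | succ m =>
    have h : besselJ (m + 1) 0 = 0 := by
      have hJ : besselJ (m + 1) 0 = ∑' k, bf (m + 1) k 0 := rfl
      rw [hJ]
      have : ∀ k, bf (m + 1) k 0 = 0 := by
        intro k
        have : (0:ℝ) / 2 = 0 := by norm_num
        rw [bf, this, zero_pow (by omega)]
        ring
      simp [this]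
    rw [h, zero_mul]

lemma hasDerivAt_comp_mul (l : ℕ) (a r : ℝ) :
    HasDerivAt (fun s => besselJ l (a * s)) (a * besselJ1 l (a * r)) r := by
  have h := (hasDerivAt_besselJ l (a * r)).comp r ((hasDerivAt_id r).const_mul a)
  simpa [mul_comm, Function.comp_def] using h

lemma hasDerivAt_comp_mul1 (l : ℕ) (a r : ℝ) :
    HasDerivAt (fun s => besselJ1 l (a * s)) (a * besselJ2 l (a * r)) r := by
  have h := (hasDerivAt_besselJ1 l (a * r)).comp r ((hasDerivAt_id r).const_mul a)
  simpa [mul_comm, Function.comp_def] using h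

lemma F_hasDeriv (l : ℕ) (a b : ℝ) (ha : a ≠ 0) (hb : b ≠ 0) (r : ℝ) :
    HasDerivAt (fun s => s * (a * besselJ1 l (a * s) * besselJ l (b * s)
        - b * besselJ l (a * s) * besselJ1 l (b * s)))
      ((b ^ 2 - a ^ 2) * (besselJ l (a * r) * besselJ l (b * r) * r)) r := by
  have hA := hasDerivAt_comp_mul l a r
  have hA1 := hasDerivAt_comp_mul1 l a r
  have hB := hasDerivAt_comp_mul l b r
  have hB1 := hasDerivAt_comp_mul1 l b r
  have hInner := ((hA1.const_mul a).mul hB).sub ((hA.const_mul b).mul hB1)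
  have hF := (hasDerivAt_id r).mul hInner
  refine hF.congr_deriv (Eq.symm ?_)
  rcases eq_or_ne r 0 with hr | hr
  · subst hr
    have h0 := prod_zero l
    simp only [mul_zero, id_eq, zero_mul, one_mul, add_zero, Pi.mul_apply, Pi.sub_apply]
    linear_combination (b - a) * h0
  · have har : a * r ≠ 0 := mul_ne_zero ha hr
    have hbr : b * r ≠ 0 := mul_ne_zero hb hr
    have o1 := bessel_ode l (a * r)
    have o2 := bessel_ode l (b * r)
    have e1 : besselJ2 l (a * r) = (-(a * r) * besselJ1 l (a * r)
        - ((a * r) ^ 2 - (l:ℝ) ^ 2) * besselJ l (a * r)) / (a * r) ^ 2 := by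
      rw [eq_div_iff (pow_ne_zero 2 har)]
      linarith [o1]
    have e2 : besselJ2 l (b * r) = (-(b * r) * besselJ1 l (b * r)
        - ((b * r) ^ 2 - (l:ℝ) ^ 2) * besselJ l (b * r)) / (b * r) ^ 2 := by
      rw [eq_div_iff (pow_ne_zero 2 hbr)]
      linarith [o2]
    simp only [id_eq, one_mul, Pi.mul_apply, Pi.sub_apply]
    rw [e1, e2]
    field_simp
    ring

end BesselAux

open BesselAux in
/-- orthogonality of Bessel functions at distinct positive zeros. -/
theorem besselJ_orthogonal (l : ℕ) (a b : ℝ) (ha : 0 < a) (hb : 0 < b) (hab : a ≠ b)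
    (hJa : besselJ l a = 0) (hJb : besselJ l b = 0) :
    ∫ r in (0:ℝ)..1, besselJ l (a * r) * besselJ l (b * r) * r = 0 := by
  have hG : Continuous (fun r : ℝ =>
      (b ^ 2 - a ^ 2) * (besselJ l (a * r) * besselJ l (b * r) * r)) := by
    apply continuous_const.mul
    exact (((continuous_besselJ l).comp (continuous_const.mul continuous_id)).mul
      ((continuous_besselJ l).comp (continuous_const.mul continuous_id))).mul continuous_id
  have hftc := intervalIntegral.integral_eq_sub_of_hasDerivAt
    (f := fun s => s * (a * besselJ1 l (a * s) * besselJ l (b * s)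
        - b * besselJ l (a * s) * besselJ1 l (b * s)))
    (f' := fun r => (b ^ 2 - a ^ 2) * (besselJ l (a * r) * besselJ l (b * r) * r))
    (fun t _ => F_hasDeriv l a b ha.ne' hb.ne' t)
    (hG.intervalIntegrable 0 1)
  simp only [mul_one, mul_zero, zero_mul, one_mul, hJa, hJb, sub_zero] at hftc
  rw [intervalIntegral.integral_const_mul] at hftc
  have hne : b ^ 2 - a ^ 2 ≠ 0 := by
    intro h
    have h2 : (b - a) * (b + a) = 0 := by linear_combination h
    rcases mul_eq_zero.mp h2 with h3 | h3
    · exact hab (by linarith)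
    · linarith
  have hftc' : (b ^ 2 - a ^ 2) * ∫ r in (0:ℝ)..1,
      besselJ l (a * r) * besselJ l (b * r) * r = 0 := by
    exact hftc
  exact (mul_eq_zero.mp hftc').resolve_left hne
end

section
/- If f : ℝ² → ℂ satisfies f(x) = F(‖x‖) with F continuous and compactly supported, and ∫₀^∞ F(r) J₀(ω r) r dr = 0 for all ω ≥ 0, then F(r) = 0 for all r ≥ 0. -/
open MeasureTheory Real

open intervalIntegral

lemma cosPowOdd (k : ℕ) : ∫ x in (-π)..π, Real.cos x ^ (2*k+1) = 0 := by
  induction k with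
  | zero => simp
  | succ k ih =>
    have : 2*(k+1)+1 = (2*k+1)+2 := by ring
    rw [this, integral_cos_pow]
    simp [ih]

lemma cosPowEven (k : ℕ) : ∫ x in (-π)..π, Real.cos x ^ (2*k)
    = 2 * π * (2*k).factorial / (4^k * ((k.factorial : ℝ))^2) := by
  induction k with
  | zero => norm_num; ring
  | succ k ih =>
    have : 2*(k+1) = (2*k)+2 := by ring
    rw [this, integral_cos_pow, ih]
    have h1 : ((2*k+2).factorial : ℝ) = (2*(k:ℝ)+2) * (2*k+1) * (2*k).factorial := by
      have e : 2*k+2 = (2*k+1) + 1 := by ring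
      rw [e, Nat.factorial_succ]
      push_cast [Nat.factorial_succ]
      ring
    have h2 : (((k+1).factorial : ℝ)) = ((k:ℝ)+1) * k.factorial := by
      push_cast [Nat.factorial_succ]; ring
    rw [h1, h2]
    have hf : ((k.factorial : ℝ)) ≠ 0 := Nat.cast_ne_zero.2 k.factorial_ne_zero
    have h4 : (4:ℝ)^k ≠ 0 := by positivity
    have hk1 : ((k:ℝ)+1) ≠ 0 := by positivity
    simp only [Real.sin_pi, Real.sin_neg, Real.sin_pi, neg_zero, mul_zero, zero_mul]
    rw [pow_succ]
    field_simp
    push_cast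
    ring

lemma besselJ_summable (a : ℝ) :
    Summable (fun k : ℕ => (-1 : ℝ) ^ k / (Nat.factorial k * Nat.factorial (k + 0)) * (a / 2) ^ (2 * k + 0)) := by
  have hg : Summable (fun k : ℕ => (a^2/4)^k / (Nat.factorial k)) := Real.summable_pow_div_factorial _
  apply Summable.of_norm
  refine hg.of_nonneg_of_le (fun k => norm_nonneg _) (fun k => ?_)
  have h1 : ‖(-1 : ℝ) ^ k / (Nat.factorial k * Nat.factorial (k + 0)) * (a / 2) ^ (2 * k + 0)‖
      = (a^2/4)^k / (Nat.factorial k * Nat.factorial k) := by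
    rw [norm_mul, norm_div, norm_pow, norm_pow, norm_neg, norm_one, one_pow,
      Real.norm_eq_abs, Real.norm_eq_abs, Nat.add_zero, Nat.add_zero, one_div,
      abs_of_nonneg (by positivity : (0:ℝ) ≤ (Nat.factorial k : ℝ) * Nat.factorial k),
      pow_mul, sq_abs, inv_mul_eq_div]
    congr 1
    rw [div_pow]
    norm_num
  rw [h1]
  have hk : (1:ℝ) ≤ (Nat.factorial k : ℝ) := by exact_mod_cast Nat.one_le_iff_ne_zero.2 k.factorial_ne_zero
  have hnum : (0:ℝ) ≤ (a^2/4)^k := by positivity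
  apply div_le_div_of_nonneg_left hnum (by positivity)
  nlinarith [hk]

lemma expCosInt (a : ℝ) :
    ∫ θ in Set.Ioc (-π) π, Complex.exp (-(a * Real.cos θ) * Complex.I)
      = ((2 * π * besselJ 0 a : ℝ) : ℂ) := by
  have hpi : (-π) ≤ π := by linarith [pi_pos]
  set F : ℕ → ℝ → ℂ := fun n θ => (-(a * Real.cos θ) * Complex.I)^n / n.factorial with hFdef
  have hexp : ∀ θ : ℝ, Complex.exp (-(a * Real.cos θ) * Complex.I) = ∑' n, F n θ := by
    intro θ
    rw [Complex.exp_eq_exp_ℂ, NormedSpace.exp_eq_tsum_div]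
  have hFint : ∀ n, IntegrableOn (F n) (Set.Ioc (-π) π) := by
    intro n
    apply Continuous.integrableOn_Ioc
    fun_prop
  have hFnorm : ∀ n θ, ‖F n θ‖ ≤ |a|^n / n.factorial := by
    intro n θ
    simp only [hFdef, norm_div, norm_pow, Complex.norm_natCast]
    gcongr
    · have e : ‖-((a:ℂ) * (Real.cos θ:ℂ)) * Complex.I‖ = |a| * |Real.cos θ| := by
        rw [norm_mul, norm_neg, norm_mul, Complex.norm_real, Complex.norm_real,
          Complex.norm_I, mul_one, Real.norm_eq_abs, Real.norm_eq_abs]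
      rw [e]
      nlinarith [abs_cos_le_one θ, abs_nonneg a, abs_nonneg (Real.cos θ)]
  have hnormint : ∀ n, (∫ θ in Set.Ioc (-π) π, ‖F n θ‖) ≤ (2*π) * (|a|^n / n.factorial) := by
    intro n
    calc (∫ θ in Set.Ioc (-π) π, ‖F n θ‖) ≤ ∫ _ in Set.Ioc (-π) π, |a|^n / n.factorial := by
          apply setIntegral_mono_on (hFint n).norm (integrableOn_const (by
            rw [Real.volume_Ioc]; exact ENNReal.ofReal_ne_top)) measurableSet_Ioc
          exact fun θ _ => hFnorm n θ
      _ = (2*π) * (|a|^n / n.factorial) := by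
          rw [setIntegral_const, Real.volume_real_Ioc_of_le (by linarith [pi_pos]), smul_eq_mul]
          ring_nf
  have hsum : Summable (fun n => ∫ θ in Set.Ioc (-π) π, ‖F n θ‖) := by
    have : Summable (fun n : ℕ => (2*π) * (|a|^n / n.factorial)) :=
      (Real.summable_pow_div_factorial _).mul_left _
    exact this.of_nonneg_of_le (fun n => integral_nonneg (fun θ => norm_nonneg _)) hnormint
  have hswap : (∫ θ in Set.Ioc (-π) π, Complex.exp (-(a * Real.cos θ) * Complex.I))
      = ∑' n, ∫ θ in Set.Ioc (-π) π, F n θ := by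
    simp_rw [hexp]
    exact (integral_tsum_of_summable_integral_norm hFint hsum).symm
  rw [hswap]
  have hterm : ∀ n : ℕ, (∫ θ in Set.Ioc (-π) π, F n θ)
      = (-(a:ℂ)*Complex.I)^n / n.factorial * ((∫ θ in (-π)..π, Real.cos θ ^ n : ℝ) : ℂ) := by
    intro n
    calc ∫ θ in Set.Ioc (-π) π, F n θ
        = ∫ θ in Set.Ioc (-π) π, (-(a:ℂ)*Complex.I)^n / n.factorial * ((Real.cos θ ^ n : ℝ) : ℂ) := by
          refine integral_congr_ae (Filter.Eventually.of_forall fun θ => ?_)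
          simp only [hFdef]
          rw [div_mul_eq_mul_div]
          congr 1
          rw [show (-((a:ℂ) * (Real.cos θ:ℂ)) * Complex.I) = (-(a:ℂ)*Complex.I) * (Real.cos θ:ℂ) by ring,
            mul_pow, Complex.ofReal_pow]
      _ = (-(a:ℂ)*Complex.I)^n / n.factorial * ∫ θ in Set.Ioc (-π) π, ((Real.cos θ ^ n : ℝ) : ℂ) :=
          MeasureTheory.integral_const_mul _ _
      _ = _ := by rw [show (∫ θ in Set.Ioc (-π) π, ((Real.cos θ ^ n : ℝ) : ℂ)) = ∫ θ in (-π)..π, ((Real.cos θ ^ n : ℝ) : ℂ) from (intervalIntegral.integral_of_le hpi).symm,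
                    intervalIntegral.integral_ofReal]
  simp_rw [hterm]
  set c : ℕ → ℂ := fun n => (-(a:ℂ)*Complex.I)^n / n.factorial
    * ((∫ θ in (-π)..π, Real.cos θ ^ n : ℝ) : ℂ) with hc
  have hodd : ∀ k, c (2*k+1) = 0 := by
    intro k
    simp only [hc, cosPowOdd k, Complex.ofReal_zero, mul_zero]
  have heven : ∀ k : ℕ, c (2*k)
      = ((2 * π * ((-1 : ℝ) ^ k / (Nat.factorial k * Nat.factorial (k+0)) * (a / 2) ^ (2*k+0)) : ℝ) : ℂ) := by
    intro k
    simp only [hc, cosPowEven k]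
    have h1 : (-(a:ℂ)*Complex.I)^(2*k) = (-1:ℂ)^k * (a:ℂ)^(2*k) := by
      rw [pow_mul, show (-(a:ℂ)*Complex.I)^2 = -((a:ℂ)^2) by
        rw [mul_pow, Complex.I_sq]; ring]
      rw [show -((a:ℂ)^2) = (-1) * (a:ℂ)^2 by ring, mul_pow, ← pow_mul]
    rw [h1]
    have hfac2 : ((2*k).factorial : ℂ) ≠ 0 := by
      exact_mod_cast Nat.cast_ne_zero.2 (2*k).factorial_ne_zero
    have hfack : ((k.factorial : ℝ)) ≠ 0 := Nat.cast_ne_zero.2 k.factorial_ne_zero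
    push_cast
    rw [div_mul_eq_mul_div, div_mul_eq_mul_div, div_eq_iff hfac2]
    have h4 : ((4:ℂ))^k ≠ 0 := by norm_num
    have hfackC : ((k.factorial : ℂ)) ≠ 0 := by exact_mod_cast hfack
    have h24 : ((2:ℂ))^(2*k) = 4^k := by rw [pow_mul]; norm_num
    field_simp
    rw [Nat.add_zero, Nat.add_zero, div_pow, ← h24]
    field_simp
  have hsum_even : Summable (fun k => c (2*k)) := by
    rw [funext heven]
    apply Summable.map (f := fun k : ℕ => 2 * π * ((-1 : ℝ) ^ k / (Nat.factorial k * Nat.factorial (k+0)) * (a / 2) ^ (2*k+0)))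
      (g := Complex.ofRealHom.toAddMonoidHom)
    · exact (besselJ_summable a).mul_left _
    · exact Complex.continuous_ofReal
  have hsum_odd : Summable (fun k => c (2*k+1)) := by
    rw [funext hodd]; exact summable_zero
  rw [← tsum_even_add_odd hsum_even hsum_odd]
  calc (∑' k, c (2*k)) + ∑' k, c (2*k+1)
      = ∑' k, c (2*k) := by simp_rw [hodd]; rw [tsum_zero, add_zero]
    _ = ∑' k : ℕ, ((2 * π * ((-1 : ℝ) ^ k / (Nat.factorial k * Nat.factorial (k+0)) * (a / 2) ^ (2*k+0)) : ℝ) : ℂ) :=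
        tsum_congr heven
    _ = ((∑' k : ℕ, 2 * π * ((-1 : ℝ) ^ k / (Nat.factorial k * Nat.factorial (k+0)) * (a / 2) ^ (2*k+0)) : ℝ) : ℂ) :=
        (Complex.ofReal_tsum _).symm
    _ = _ := by rw [tsum_mul_left, besselJ]

lemma expCosIntShift (b φ : ℝ) :
    ∫ θ in Set.Ioc (-π) π, Complex.exp (-(b * Real.cos (θ - φ)) * Complex.I)
      = ((2 * π * besselJ 0 b : ℝ) : ℂ) := by
  have hpi : (-π) ≤ π := by linarith [pi_pos]
  rw [← intervalIntegral.integral_of_le hpi]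
  have hper : Function.Periodic (fun θ : ℝ => Complex.exp (-(b * Real.cos θ) * Complex.I)) (2*π) := by
    intro x
    simp [Real.cos_add_two_pi]
  calc ∫ θ in (-π)..π, Complex.exp (-(b * Real.cos (θ - φ)) * Complex.I)
      = ∫ θ in (-π - φ)..(π - φ), Complex.exp (-(b * Real.cos θ) * Complex.I) :=
        intervalIntegral.integral_comp_sub_right (fun θ => Complex.exp (-((b:ℂ) * (Real.cos θ:ℂ)) * Complex.I)) φ
    _ = ∫ θ in (-π)..π, Complex.exp (-(b * Real.cos θ) * Complex.I) := by
        have h2 := hper.intervalIntegral_add_eq (-π - φ) (-π)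
        rw [show -π - φ + 2*π = π - φ by ring, show -π + 2*π = π by ring] at h2
        exact h2
    _ = _ := by rw [intervalIntegral.integral_of_le hpi, expCosInt]

lemma innerInt (r w0 w1 : ℝ) :
    ∫ θ in Set.Ioc (-π) π,
        Complex.exp (-((2*π*(r*Real.cos θ * w0 + r*Real.sin θ * w1) : ℝ) : ℂ) * Complex.I)
      = ((2 * π * besselJ 0 (2*π*(r*Real.sqrt (w0^2+w1^2))) : ℝ) : ℂ) := by
  set z : ℂ := Complex.mk w0 w1 with hz
  have habs : ‖z‖ = Real.sqrt (w0^2+w1^2) := by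
    rw [Complex.norm_def, Complex.normSq_mk]
    ring_nf
  have h0 : ‖z‖ * Real.cos (Complex.arg z) = w0 := by
    rw [Complex.norm_mul_cos_arg]
  have h1 : ‖z‖ * Real.sin (Complex.arg z) = w1 := by
    rw [Complex.norm_mul_sin_arg]
  have key : ∀ θ : ℝ, 2*π*(r*Real.cos θ * w0 + r*Real.sin θ * w1)
      = (2*π*(r*Real.sqrt (w0^2+w1^2))) * Real.cos (θ - Complex.arg z) := by
    intro θ
    rw [Real.cos_sub, ← habs, ← h0, ← h1]
    ring
  have : ∀ θ : ℝ, Complex.exp (-((2*π*(r*Real.cos θ * w0 + r*Real.sin θ * w1) : ℝ) : ℂ) * Complex.I)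
      = Complex.exp (-(((2*π*(r*Real.sqrt (w0^2+w1^2))) * Real.cos (θ - Complex.arg z) : ℝ) : ℂ) * Complex.I) := by
    intro θ
    rw [key θ]
  rw [integral_congr_ae (Filter.Eventually.of_forall fun θ => this θ)]
  have := expCosIntShift (2*π*(r*Real.sqrt (w0^2+w1^2))) (Complex.arg z)
  push_cast at this ⊢
  exact this

open FourierTransform in
/-- injectivity of the order-zero Hankel transform on continuous
compactly supported functions. -/
theorem hankel_injective (F : ℝ → ℂ) (hF : Continuous F) (hsupp : HasCompactSupport F)
    (f : EuclideanSpace ℝ (Fin 2) → ℂ) (hf : ∀ x, f x = F ‖x‖)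
    (h : ∀ ω : ℝ, 0 ≤ ω → ∫ r in Set.Ioi (0:ℝ), F r * (besselJ 0 (ω * r) : ℝ) * (r : ℂ) = 0) :
    ∀ r : ℝ, 0 ≤ r → F r = 0 := by
  have hfc : Continuous f := by
    have : f = fun x => F ‖x‖ := funext hf
    rw [this]; exact hF.comp continuous_norm
  -- radius bound
  obtain ⟨R, hRpos, hRsupp⟩ : ∃ R > 0, ∀ s : ℝ, R < |s| → F s = 0 := by
    obtain ⟨R, hR⟩ := hsupp.isCompact.isBounded.subset_closedBall 0
    refine ⟨max R 1, lt_max_of_lt_right one_pos, fun s hs => ?_⟩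
    by_contra hFs
    have : s ∈ tsupport F := subset_tsupport F (by simpa using hFs)
    have := hR this
    simp only [Metric.mem_closedBall, Real.dist_eq, sub_zero] at this
    have : |s| ≤ max R 1 := le_trans this (le_max_left _ _)
    linarith
  have hfcs : HasCompactSupport f := by
    apply HasCompactSupport.intro (isCompact_closedBall (0 : EuclideanSpace ℝ (Fin 2)) R)
    intro x hx
    rw [hf x]
    apply hRsupp
    simp only [Metric.mem_closedBall, dist_zero_right] at hx
    rw [abs_of_nonneg (norm_nonneg x)]
    linarith
  have hfi : Integrable f := hfc.integrable_of_hasCompactSupport hfcs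
  -- Fourier transform vanishes
  have hFT : ∀ w : EuclideanSpace ℝ (Fin 2), 𝓕 f w = 0 := by
    intro w
    set c : ℝ := Real.sqrt ((w 0)^2 + (w 1)^2) with hcdef
    set ψ := (MeasurableEquiv.toLp 2 (Fin 2 → ℝ)).symm.trans (MeasurableEquiv.finTwoArrow) with hψdef
    have hψmp : MeasurePreserving ψ volume volume := by
      rw [hψdef]
      have := (volume_preserving_finTwoArrow ℝ).comp
        (EuclideanSpace.volume_preserving_symm_measurableEquiv_toLp (Fin 2))
      rwa [← MeasurableEquiv.coe_trans] at this
    set g : ℝ × ℝ → ℂ := fun p =>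
      Complex.exp (((2 * π * -(p.1 * w 0 + p.2 * w 1) : ℝ) : ℂ) * Complex.I)
        * F (Real.sqrt (p.1^2 + p.2^2)) with hg
    have step1 : 𝓕 f w = ∫ p : ℝ × ℝ, g p := by
      rw [Real.fourier_eq, ← hψmp.integral_comp ψ.measurableEmbedding g]
      refine integral_congr_ae (.of_forall fun v => ?_)
      have hx : ψ v = (v 0, v 1) := rfl
      simp only [Circle.smul_def, Real.fourierChar_apply, hf, hg, hx]
      congr 3
      · norm_cast
        congr 1
        rw [PiLp.inner_apply]
        simp only [RCLike.inner_apply, conj_trivial, Fin.sum_univ_two]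
        ring
      · rw [EuclideanSpace.norm_eq]
        congr 1
        simp [Fin.sum_univ_two, Real.norm_eq_abs, sq_abs]
    set G : ℝ × ℝ → ℂ := fun q => (q.1 : ℂ) *
      (Complex.exp (((2 * π * -(q.1 * Real.cos q.2 * w 0 + q.1 * Real.sin q.2 * w 1) : ℝ) : ℂ) * Complex.I)
        * F |q.1|) with hG
    have hsqrt : ∀ q : ℝ × ℝ, Real.sqrt ((q.1 * Real.cos q.2)^2 + (q.1 * Real.sin q.2)^2) = |q.1| := by
      intro q
      have e : (q.1 * Real.cos q.2)^2 + (q.1 * Real.sin q.2)^2 = q.1^2 := by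
        have := Real.sin_sq_add_cos_sq q.2
        nlinarith
      rw [e, Real.sqrt_sq_eq_abs]
    have hpolar : ∀ q : ℝ × ℝ, q.1 • g (polarCoord.symm q) = G q := by
      intro q
      have e1 : polarCoord.symm q = (q.1 * Real.cos q.2, q.1 * Real.sin q.2) := rfl
      rw [e1]
      simp only [hg, hG]
      rw [Complex.real_smul, hsqrt q]
    have hc0 : 0 ≤ c := hcdef ▸ Real.sqrt_nonneg _
    have step3 : ∫ p : ℝ × ℝ, g p = ∫ q in Set.Ioi (0:ℝ) ×ˢ Set.Ioo (-π) π, G q := by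
      rw [← integral_comp_polarCoord_symm g, ← polarCoord_target]
      exact integral_congr_ae (.of_forall hpolar)
    have hGint : IntegrableOn G (Set.Ioi (0:ℝ) ×ˢ Set.Ioo (-π) π) := by
      have hGc : Continuous G := by
        apply Continuous.mul
        · exact Complex.continuous_ofReal.comp continuous_fst
        apply Continuous.mul
        · apply Complex.continuous_exp.comp
          apply Continuous.mul _ continuous_const
          exact Complex.continuous_ofReal.comp (by fun_prop)
        · exact hF.comp (continuous_abs.comp continuous_fst)
      have h1 : IntegrableOn G (Set.Ioc 0 R ×ˢ Set.Ioo (-π) π) := by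
        apply (hGc.continuousOn.integrableOn_compact
          ((isCompact_Icc (a:=(0:ℝ)) (b:=R)).prod (isCompact_Icc (a:=-π) (b:=π)))).mono_set
        exact Set.prod_mono Set.Ioc_subset_Icc_self Set.Ioo_subset_Icc_self
      have h2 : IntegrableOn G (Set.Ioi R ×ˢ Set.Ioo (-π) π) := by
        apply IntegrableOn.congr_fun (integrableOn_zero)
          ?_ ((measurableSet_Ioi).prod measurableSet_Ioo)
        intro q hq
        have hq1 : R < q.1 := hq.1
        have : F |q.1| = 0 := by
          apply hRsupp
          rw [abs_abs, abs_of_pos (lt_trans hRpos hq1)]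
          exact hq1
        simp only [hG, this, mul_zero]
      have hset : Set.Ioi (0:ℝ) ×ˢ Set.Ioo (-π) π
          = (Set.Ioc 0 R ×ˢ Set.Ioo (-π) π) ∪ (Set.Ioi R ×ˢ Set.Ioo (-π) π) := by
        rw [← Set.union_prod, Set.Ioc_union_Ioi_eq_Ioi hRpos.le]
      rw [hset]
      exact h1.union h2
    have step4 : ∫ q in Set.Ioi (0:ℝ) ×ˢ Set.Ioo (-π) π, G q
        = ∫ r in Set.Ioi (0:ℝ), ∫ θ in Set.Ioo (-π) π, G (r, θ) := by
      rw [Measure.volume_eq_prod] at hGint ⊢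
      exact setIntegral_prod _ hGint
    have step5 : ∀ r ∈ Set.Ioi (0:ℝ), (∫ θ in Set.Ioo (-π) π, G (r, θ))
        = ((2*π:ℝ) : ℂ) * (F r * ((besselJ 0 ((2*π*c) * r) : ℝ) : ℂ) * (r:ℂ)) := by
      intro r hr
      rw [Set.mem_Ioi] at hr
      have habs : |r| = r := abs_of_pos hr
      have e1 : ∀ θ : ℝ, G (r, θ) = ((r:ℂ) * F r) *
          Complex.exp (-((2*π*(r*Real.cos θ * w 0 + r*Real.sin θ * w 1) : ℝ) : ℂ) * Complex.I) := by
        intro θ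
        simp only [hG, habs]
        have e2 : ((2 * π * -(r * Real.cos θ * w 0 + r * Real.sin θ * w 1) : ℝ) : ℂ)
            = -((2*π*(r*Real.cos θ * w 0 + r*Real.sin θ * w 1) : ℝ) : ℂ) := by
          push_cast; ring
        rw [e2]
        ring
      calc (∫ θ in Set.Ioo (-π) π, G (r, θ))
          = ∫ θ in Set.Ioo (-π) π, ((r:ℂ) * F r) *
            Complex.exp (-((2*π*(r*Real.cos θ * w 0 + r*Real.sin θ * w 1) : ℝ) : ℂ) * Complex.I) :=
            integral_congr_ae (.of_forall e1)
        _ = ((r:ℂ) * F r) * ∫ θ in Set.Ioo (-π) π,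
            Complex.exp (-((2*π*(r*Real.cos θ * w 0 + r*Real.sin θ * w 1) : ℝ) : ℂ) * Complex.I) :=
            MeasureTheory.integral_const_mul _ _
        _ = ((r:ℂ) * F r) * ((2 * π * besselJ 0 (2*π*(r*c)) : ℝ) : ℂ) := by
            rw [← integral_Ioc_eq_integral_Ioo, innerInt r (w 0) (w 1), ← hcdef]
        _ = _ := by
            rw [show 2*π*(r*c) = (2*π*c)*r by ring]
            push_cast
            ring
    rw [step1, step3, step4, setIntegral_congr_fun measurableSet_Ioi step5,
      MeasureTheory.integral_const_mul, h (2*π*c) (by positivity), mul_zero]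
  have hFT0 : 𝓕 f = 0 := funext hFT
  have hinv := hfc.fourierInv_fourier_eq hfi (by rw [hFT0]; exact integrable_zero _ _ _)
  have hf0 : ∀ x, f x = 0 := by
    intro x
    rw [← hinv, hFT0]
    simp only [Real.fourierInv_eq, Pi.zero_apply, smul_zero]
    simp
  intro r hr
  have := hf0 ((r : ℝ) • EuclideanSpace.single (0 : Fin 2) (1:ℝ))
  rw [hf] at this
  rwa [norm_smul, EuclideanSpace.norm_single, norm_one, mul_one, Real.norm_eq_abs,
    abs_of_nonneg hr] at this
end
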